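/- arXiv:2510.00521 — 2 statements merged into one kernel-verified Lean document; each statement's English description precedes it below -/
import Mathlib

section
/- Subadditivity under products: for all E ⊆ ℝ^m and F ⊆ ℝ^n, \overline{dim}_GB (E × F) ≤ \overline{dim}_GB E + \overline{dim}_GB F, where E × F ⊆ ℝ^{m+n} is the Cartesian product. -/
open Filter Metric Set Topology Bornology ENNReal

noncomputable section

variable {X : Type*} [PseudoMetricSpace X]

/-- `coveringNumber r E` is the smallest number of closed balls of radius `r`
needed to cover `E` (with value `⊤` if no finite cover exists). -/
def coveringNumber (r : ℝ) (E : Set X) : ℕ∞ :=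
  sInf {n : ℕ∞ | ∃ t : Finset X, (E ⊆ ⋃ x ∈ t, closedBall x r) ∧ (t.card : ℕ∞) = n}

/-- The Assouad spectrum `dim_A^θ F`. -/
def assouadSpectrum (θ : ℝ) (F : Set X) : ℝ :=
  sInf {s : ℝ | 0 ≤ s ∧ ∃ C > (0 : ℝ), ∀ R : ℝ, 0 < R → R < 1 → ∀ x ∈ F,
    (coveringNumber (R ^ (1 / θ)) (closedBall x R ∩ F) : ℝ≥0∞)
      ≤ ENNReal.ofReal (C * (R / R ^ (1 / θ)) ^ s)}

/-- The upper spectrum `\overline{dim}_A^θ F`. -/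
def upperSpectrum (θ : ℝ) (F : Set X) : ℝ :=
  sInf {s : ℝ | 0 ≤ s ∧ ∃ C > (0 : ℝ), ∀ r R : ℝ, 0 < r → r ≤ R ^ (1 / θ) →
    R ^ (1 / θ) < R → R < 1 → 0 < R → ∀ x ∈ F,
    (coveringNumber r (closedBall x R ∩ F) : ℝ≥0∞) ≤ ENNReal.ofReal (C * (R / r) ^ s)}

/-- The generalized upper box dimension `\overline{dim}_{GB} F := limsup_{θ → 0⁺} dim_A^θ F`. -/
def genUpperBoxDim (F : Set X) : ℝ :=
  limsup (fun θ : ℝ => assouadSpectrum θ F) (𝓝[>] (0 : ℝ))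

/-- The quasi-Assouad dimension `dim_{qA} F := lim_{θ → 1⁻} \overline{dim}_A^θ F`
(the limit exists by monotonicity, hence equals the limsup). -/
def quasiAssouadDim (F : Set X) : ℝ :=
  limsup (fun θ : ℝ => upperSpectrum θ F) (𝓝[<] (1 : ℝ))

/-- The upper box dimension `\overline{dim}_B F := limsup_{δ → 0⁺} log N_δ(F) / (- log δ)`. -/
def upperBoxDim (F : Set X) : ℝ :=
  limsup (fun δ : ℝ => Real.log ((coveringNumber δ F).toNat : ℝ) / (- Real.log δ))
    (𝓝[>] (0 : ℝ))

/-- The Assouad dimension `dim_A F`. -/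
def assouadDim (F : Set X) : ℝ :=
  sInf {s : ℝ | 0 ≤ s ∧ ∃ C > (0 : ℝ), ∃ ρ > (0 : ℝ), ∀ r R : ℝ, 0 < r → r < R → R < ρ →
    ∀ x ∈ F, (coveringNumber r (closedBall x R ∩ F) : ℝ≥0∞) ≤ ENNReal.ofReal (C * (R / r) ^ s)}

/-- The packing pre-measure at scale `δ`: the supremum of `∑ |B_i|^s` over at most countable
collections of disjoint closed balls of radii at most `δ` (and positive) with centres in `F`,
where `|B_i| = 2 r_i` is the diameter. -/
def packingPre (s δ : ℝ) (F : Set X) : ℝ≥0∞ :=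
  ⨆ (D : Set (X × ℝ)) (_ : D.Countable)
    (_ : ∀ p ∈ D, p.1 ∈ F ∧ 0 < p.2 ∧ p.2 ≤ δ)
    (_ : D.Pairwise fun p q => Disjoint (closedBall p.1 p.2) (closedBall q.1 q.2)),
    ∑' p : D, ENNReal.ofReal ((2 * (p : X × ℝ).2) ^ s)

/-- `𝒫₀^s(F) := lim_{δ → 0} 𝒫_δ^s(F)`; the limit exists by monotonicity and equals the inf. -/
def packingPre₀ (s : ℝ) (F : Set X) : ℝ≥0∞ :=
  ⨅ (δ : ℝ) (_ : 0 < δ), packingPre s δ F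

/-- The packing (outer) measure `𝒫^s(F)`. -/
def packingMeasure (s : ℝ) (F : Set X) : ℝ≥0∞ :=
  ⨅ (G : ℕ → Set X) (_ : F ⊆ ⋃ i, G i), ∑' i, packingPre₀ s (G i)

/-- The packing dimension `dim_P F = inf {s ≥ 0 : 𝒫^s(F) = 0}`. -/
def packingDim (F : Set X) : ℝ :=
  sInf {s : ℝ | 0 ≤ s ∧ packingMeasure s F = 0}

/-! Projecting `B(z, R) ∩ (E × F)` to the two factors and pairing `r`-covers of the projections
gives a `2r`-cover, and in the doubling space `ℝ^{m+n}` every `2r`-ball is covered by boundedly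
many `r`-balls. Hence at each scale `θ` the sum of admissible exponents for `E` and `F` is
admissible for `E × F`, so `dim_A^θ (E × F) ≤ dim_A^θ E + dim_A^θ F`. Doubling also bounds every
spectrum by a multiple of the dimension, so the limsup of the sum splits. -/

open Module
open scoped NNReal

variable {Y : Type*} [PseudoMetricSpace Y]

section CoveringNumber

lemma ENat.toENNReal_le_ofReal {n : ℕ∞} {k : ℕ} {c : ℝ} (hn : n ≤ k) (hk : (k : ℝ) ≤ c) :
    (n : ℝ≥0∞) ≤ ENNReal.ofReal c :=
  calc (n : ℝ≥0∞) ≤ (k : ℝ≥0∞) := by exact_mod_cast hn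
    _ = ENNReal.ofReal k := (ENNReal.ofReal_natCast k).symm
    _ ≤ ENNReal.ofReal c := ENNReal.ofReal_le_ofReal hk

lemma ENat.le_floor_of_toENNReal_le_ofReal {n : ℕ∞} {c : ℝ}
    (h : (n : ℝ≥0∞) ≤ ENNReal.ofReal c) : n ≤ ⌊c⌋₊ := by
  lift n to ℕ using fun hn => by simp [hn] at h
  rw [ENat.toENNReal_coe, ← ENNReal.ofReal_natCast, ENNReal.ofReal_le_ofReal_iff'] at h
  rcases h with h | h
  · exact_mod_cast Nat.le_floor h
  · simp [show n = 0 by exact_mod_cast h.antisymm n.cast_nonneg]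

lemma coveringNumber_le_card {r : ℝ} {A : Set X} (t : Finset X)
    (ht : A ⊆ ⋃ c ∈ t, closedBall c r) : coveringNumber r A ≤ t.card :=
  sInf_le ⟨t, ht, rfl⟩

lemma coveringNumber_mono_set {r : ℝ} {A B : Set X} (h : A ⊆ B) :
    coveringNumber r A ≤ coveringNumber r B :=
  sInf_le_sInf fun _ ⟨t, ht, hc⟩ => ⟨t, h.trans ht, hc⟩

lemma exists_finset_cover_of_coveringNumber_le {r : ℝ} {A : Set X} {k : ℕ}
    (h : coveringNumber r A ≤ k) :
    ∃ t : Finset X, A ⊆ ⋃ c ∈ t, closedBall c r ∧ t.card ≤ k := by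
  have hne : {n : ℕ∞ | ∃ t : Finset X, A ⊆ ⋃ c ∈ t, closedBall c r ∧ (t.card : ℕ∞) = n}.Nonempty :=
    Set.nonempty_iff_ne_empty.mpr fun he => by
      rw [_root_.coveringNumber, he, sInf_empty] at h
      exact ENat.natCast_ne_top k (top_le_iff.mp h)
  obtain ⟨t, ht, hcard⟩ := csInf_mem hne
  exact ⟨t, ht, by exact_mod_cast hcard.le.trans h⟩

lemma coveringNumber_le_mul_of_le {r ρ : ℝ} {A : Set X} {n k : ℕ}
    (hA : coveringNumber ρ A ≤ n) (hk : ∀ c : X, coveringNumber r (closedBall c ρ) ≤ k) :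
    coveringNumber r A ≤ (n * k : ℕ) := by
  classical
  obtain ⟨t, ht, htn⟩ := exists_finset_cover_of_coveringNumber_le hA
  choose u hu huk using fun c : X => exists_finset_cover_of_coveringNumber_le (hk c)
  refine (coveringNumber_le_card (t.biUnion u) fun x hx => ?_).trans ?_
  · obtain ⟨c, hct, hxc⟩ := mem_iUnion₂.mp (ht hx)
    obtain ⟨c', hc'u, hxc'⟩ := mem_iUnion₂.mp (hu c hxc)
    exact mem_iUnion₂.mpr ⟨c', Finset.mem_biUnion.mpr ⟨c, hct, hc'u⟩, hxc'⟩
  · calc ((t.biUnion u).card : ℕ∞) ≤ (t.card * k : ℕ) := by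
          exact_mod_cast Finset.card_biUnion_le_card_mul t u k fun c _ => huk c
      _ ≤ (n * k : ℕ) := by gcongr

lemma coveringNumber_image_le {f : X → Y} (hf : Isometry f) (r : ℝ) (A : Set X) :
    coveringNumber r (f '' A) ≤ coveringNumber r A := by
  classical
  refine le_sInf ?_
  rintro _ ⟨t, ht, rfl⟩
  refine (coveringNumber_le_card (t.image f) ?_).trans (by exact_mod_cast Finset.card_image_le)
  rintro _ ⟨x, hx, rfl⟩
  obtain ⟨c, hct, hxc⟩ := mem_iUnion₂.mp (ht hx)
  exact mem_iUnion₂.mpr ⟨f c, Finset.mem_image_of_mem f hct, by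
    rwa [mem_closedBall, hf.dist_eq]⟩

lemma IsometryEquiv.coveringNumber_preimage (Φ : X ≃ᵢ Y) (r : ℝ) (A : Set Y) :
    coveringNumber r (Φ ⁻¹' A) = coveringNumber r A := by
  refine le_antisymm ?_ ?_
  · rw [← Φ.image_symm]
    exact coveringNumber_image_le Φ.symm.isometry r A
  · conv_lhs => rw [← Φ.image_preimage A]
    exact coveringNumber_image_le Φ.isometry r _

lemma coveringNumber_le_metricCoveringNumber (r : ℝ≥0) (A : Set X) :
    coveringNumber (r : ℝ) A ≤ Metric.coveringNumber r A := by
  refine le_iInf fun C => le_iInf fun _ => le_iInf fun hC => ?_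
  rcases C.finite_or_infinite with hfin | hinf
  · rw [← hfin.coe_toFinset, Set.encard_coe_eq_coe_finsetCard]
    refine coveringNumber_le_card _ ?_
    simpa using isCover_iff_subset_iUnion_closedBall.mp hC
  · simp [hinf.encard_eq]

end CoveringNumber

section Doubling

def IsDoublingWith (X : Type*) [PseudoMetricSpace X] (a : ℕ) : Prop :=
  ∀ (x : X) (r : ℝ), 0 < r → coveringNumber r (closedBall x (2 * r)) ≤ (2 ^ a : ℕ)

section FiniteDimensional

variable {E : Type*} [NormedAddCommGroup E] [NormedSpace ℝ E] [FiniteDimensional ℝ E]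

/-- Rescaling `closedBall x (2 * r)` to `closedBall 0 2` reduces this to the Besicovitch
packing bound. -/
lemma card_le_of_separated_of_subset_closedBall {x : E} {r : ℝ} (hr : 0 < r) (s : Finset E)
    (hs : ∀ c ∈ s, c ∈ closedBall x (2 * r)) (hsep : ∀ c ∈ s, ∀ d ∈ s, c ≠ d → r < dist c d) :
    s.card ≤ 5 ^ finrank ℝ E := by
  classical
  set g : E → E := fun c => r⁻¹ • (c - x)
  have hg : g.Injective := fun c d h => by simpa [g, hr.ne'] using h
  rw [← Finset.card_image_of_injective s hg]
  refine Besicovitch.card_le_of_separated _ ?_ ?_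
  · simp only [Finset.mem_image, forall_exists_index, and_imp, forall_apply_eq_imp_iff₂]
    intro c hc
    have := mem_closedBall.mp (hs c hc)
    rw [dist_eq_norm] at this
    rw [norm_smul, norm_inv, Real.norm_of_nonneg hr.le, inv_mul_le_iff₀ hr]
    linarith
  · simp only [Finset.mem_image, forall_exists_index, and_imp, forall_apply_eq_imp_iff₂]
    intro c hc d hd hcd
    have hcd' : c ≠ d := fun h => hcd (h ▸ rfl)
    have := hsep c hc d hd hcd'
    rw [dist_eq_norm] at this
    rw [← smul_sub, sub_sub_sub_cancel_right, norm_smul, norm_inv, Real.norm_of_nonneg hr.le,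
      le_inv_mul_iff₀ hr, mul_one]
    exact this.le

lemma packingNumber_closedBall_two_mul_le (x : E) {r : ℝ≥0} (hr : 0 < r) :
    packingNumber r (closedBall x (2 * r)) ≤ 5 ^ finrank ℝ E := by
  refine iSup_le fun C => iSup_le fun hCB => iSup_le fun hC => ?_
  by_contra! hlt
  obtain ⟨t, htC, ht⟩ := Set.exists_subset_encard_eq (Order.add_one_le_of_lt hlt)
  have htfin : t.Finite := Set.finite_of_encard_eq_coe (by rw [ht]; rfl)
  have hcard := card_le_of_separated_of_subset_closedBall (x := x) hr htfin.toFinset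
    (fun c hc => hCB (htC (by simpa using hc)))
    (fun c hc d hd hcd => by
      have := hC (htC (by simpa using hc)) (htC (by simpa using hd)) hcd
      beta_reduce at this
      rw [edist_dist, ENNReal.coe_nnreal_eq] at this
      exact (ENNReal.ofReal_lt_ofReal_iff_of_nonneg r.2).mp this)
  rw [htfin.encard_eq_coe_toFinset_card] at ht
  norm_cast at ht
  omega

lemma isDoublingWith_finrank : IsDoublingWith E (3 * finrank ℝ E) := by
  intro x r hr
  calc coveringNumber r (closedBall x (2 * r))
      ≤ Metric.coveringNumber ⟨r, hr.le⟩ (closedBall x (2 * r)) :=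
        coveringNumber_le_metricCoveringNumber ⟨r, hr.le⟩ _
    _ ≤ packingNumber ⟨r, hr.le⟩ (closedBall x (2 * r)) := coveringNumber_le_packingNumber _ _
    _ ≤ (5 ^ finrank ℝ E : ℕ) := by
        exact_mod_cast packingNumber_closedBall_two_mul_le x (r := ⟨r, hr.le⟩) hr
    _ ≤ (2 ^ (3 * finrank ℝ E) : ℕ) := by
        rw [pow_mul]; exact_mod_cast Nat.pow_le_pow_left (by norm_num) _

end FiniteDimensional

lemma IsDoublingWith.coveringNumber_closedBall_le {a : ℕ} (hX : IsDoublingWith X a) (x : X)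
    {r R : ℝ} (hr : 0 < r) (hrR : r ≤ R) :
    (coveringNumber r (closedBall x R) : ℝ≥0∞) ≤ ENNReal.ofReal ((2 * R / r) ^ a) := by
  obtain ⟨k, hk⟩ := pow_unbounded_of_one_lt (R / r) one_lt_two
  induction k generalizing r with
  | zero => rw [pow_zero, div_lt_one hr] at hk; linarith
  | succ k ih =>
    rcases lt_or_ge R (2 * r) with hR | hR
    · refine ENat.toENNReal_le_ofReal
        ((coveringNumber_mono_set (closedBall_subset_closedBall hR.le)).trans (hX x r hr)) ?_
      push_cast
      gcongr
      rw [le_div_iff₀ hr]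
      linarith
    · have h2r : 0 < 2 * r := by positivity
      have hk' : R / (2 * r) < 2 ^ k := by
        rw [mul_comm, ← div_div, div_lt_iff₀ two_pos, ← pow_succ]
        exact hk
      have h2rR := ENat.le_floor_of_toENNReal_le_ofReal (ih h2r hR hk')
      refine ENat.toENNReal_le_ofReal (coveringNumber_le_mul_of_le h2rR (hX · r hr)) ?_
      push_cast
      calc (⌊(2 * R / (2 * r)) ^ a⌋₊ : ℝ) * 2 ^ a ≤ (2 * R / (2 * r)) ^ a * 2 ^ a := by
            gcongr
            exact Nat.floor_le (pow_nonneg (div_nonneg (by linarith) h2r.le) _)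
        _ = (2 * R / r) ^ a := by
            rw [← mul_pow]
            congr 1
            field_simp

end Doubling

section AssouadSpectrum

def assouadSpectrumExponents (θ : ℝ) (F : Set X) : Set ℝ :=
  {s : ℝ | 0 ≤ s ∧ ∃ C > (0 : ℝ), ∀ R : ℝ, 0 < R → R < 1 → ∀ x ∈ F,
    (coveringNumber (R ^ (1 / θ)) (closedBall x R ∩ F) : ℝ≥0∞)
      ≤ ENNReal.ofReal (C * (R / R ^ (1 / θ)) ^ s)}

lemma assouadSpectrum_eq_sInf (θ : ℝ) (F : Set X) :
    assouadSpectrum θ F = sInf (assouadSpectrumExponents θ F) :=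
  rfl

lemma assouadSpectrum_nonneg (θ : ℝ) (F : Set X) : 0 ≤ assouadSpectrum θ F :=
  Real.sInf_nonneg fun _ hs => hs.1

lemma assouadSpectrum_le_of_mem {θ s : ℝ} {F : Set X} (hs : s ∈ assouadSpectrumExponents θ F) :
    assouadSpectrum θ F ≤ s :=
  csInf_le ⟨0, fun _ ht => ht.1⟩ hs

lemma Real.rpow_one_div_le_self {θ R : ℝ} (hθ : 0 < θ) (hθ1 : θ ≤ 1) (hR0 : 0 ≤ R)
    (hR1 : R ≤ 1) : R ^ (1 / θ) ≤ R :=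
  Real.rpow_le_self_of_le_one hR0 hR1 (one_le_one_div hθ hθ1)

lemma mem_assouadSpectrumExponents_of_le {θ s t : ℝ} (hθ : 0 < θ) (hθ1 : θ ≤ 1) {F : Set X}
    (hs : s ∈ assouadSpectrumExponents θ F) (hst : s ≤ t) : t ∈ assouadSpectrumExponents θ F := by
  obtain ⟨hs0, C, hC, h⟩ := hs
  refine ⟨hs0.trans hst, C, hC, fun R hR0 hR1 x hx => (h R hR0 hR1 x hx).trans ?_⟩
  have hRr : 1 ≤ R / R ^ (1 / θ) := (one_le_div (Real.rpow_pos_of_pos hR0 _)).mpr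
    (Real.rpow_one_div_le_self hθ hθ1 hR0.le hR1.le)
  gcongr

lemma assouadSpectrum_add_mem {θ ε : ℝ} (hθ : 0 < θ) (hθ1 : θ ≤ 1) {F : Set X}
    (hF : (assouadSpectrumExponents θ F).Nonempty) (hε : 0 < ε) :
    assouadSpectrum θ F + ε ∈ assouadSpectrumExponents θ F := by
  obtain ⟨s, hs, hlt⟩ := Real.lt_sInf_add_pos hF hε
  exact mem_assouadSpectrumExponents_of_le hθ hθ1 hs hlt.le

lemma IsDoublingWith.mem_assouadSpectrumExponents {a : ℕ} (hX : IsDoublingWith X a) {θ : ℝ}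
    (hθ : 0 < θ) (hθ1 : θ ≤ 1) (F : Set X) : (a : ℝ) ∈ assouadSpectrumExponents θ F := by
  refine ⟨a.cast_nonneg, 2 ^ a, by positivity, fun R hR0 hR1 x _ => ?_⟩
  calc (coveringNumber (R ^ (1 / θ)) (closedBall x R ∩ F) : ℝ≥0∞)
      ≤ coveringNumber (R ^ (1 / θ)) (closedBall x R) := by
        exact_mod_cast coveringNumber_mono_set inter_subset_left
    _ ≤ ENNReal.ofReal ((2 * R / R ^ (1 / θ)) ^ a) :=
        hX.coveringNumber_closedBall_le x (Real.rpow_pos_of_pos hR0 _)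
          (Real.rpow_one_div_le_self hθ hθ1 hR0.le hR1.le)
    _ = ENNReal.ofReal (2 ^ a * (R / R ^ (1 / θ)) ^ (a : ℝ)) := by
        rw [Real.rpow_natCast, ← mul_pow, mul_div_assoc]

lemma IsDoublingWith.assouadSpectrum_le {a : ℕ} (hX : IsDoublingWith X a) {θ : ℝ}
    (hθ : 0 < θ) (hθ1 : θ ≤ 1) (F : Set X) : assouadSpectrum θ F ≤ a :=
  assouadSpectrum_le_of_mem (hX.mem_assouadSpectrumExponents hθ hθ1 F)

lemma IsometryEquiv.assouadSpectrum_preimage (Φ : X ≃ᵢ Y) (θ : ℝ) (F : Set Y) :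
    assouadSpectrum θ (Φ ⁻¹' F) = assouadSpectrum θ F := by
  have hball (r R : ℝ) (x : X) : coveringNumber r (closedBall x R ∩ Φ ⁻¹' F)
      = coveringNumber r (closedBall (Φ x) R ∩ F) := by
    rw [← Φ.coveringNumber_preimage, preimage_inter, Φ.preimage_closedBall, Φ.symm_apply_apply]
  simp only [assouadSpectrum_eq_sInf, assouadSpectrumExponents, hball, mem_preimage,
    Φ.surjective.forall]

end AssouadSpectrum

section Product

lemma WithLp.prod_dist_le_add (x y : WithLp 2 (X × Y)) :
    dist x y ≤ dist x.fst y.fst + dist x.snd y.snd := by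
  rw [WithLp.prod_dist_eq_add (by norm_num), ENNReal.toReal_ofNat, Real.rpow_two, Real.rpow_two,
    ← Real.sqrt_eq_rpow, Real.sqrt_le_iff]
  have h₁ := dist_nonneg (x := x.fst) (y := y.fst)
  have h₂ := dist_nonneg (x := x.snd) (y := y.snd)
  constructor <;> nlinarith

lemma coveringNumber_two_mul_prod_le {r : ℝ} {A : Set X} {B : Set Y} {n₁ n₂ : ℕ}
    (h₁ : coveringNumber r A ≤ n₁) (h₂ : coveringNumber r B ≤ n₂) :
    coveringNumber (2 * r) (WithLp.ofLp ⁻¹' (A ×ˢ B) : Set (WithLp 2 (X × Y))) ≤ (n₁ * n₂ : ℕ) := by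
  classical
  obtain ⟨t₁, ht₁, hn₁⟩ := exists_finset_cover_of_coveringNumber_le h₁
  obtain ⟨t₂, ht₂, hn₂⟩ := exists_finset_cover_of_coveringNumber_le h₂
  refine (coveringNumber_le_card ((t₁ ×ˢ t₂).image (WithLp.toLp 2)) fun z hz => ?_).trans ?_
  · obtain ⟨c₁, hc₁, hzc₁⟩ := mem_iUnion₂.mp (ht₁ hz.1)
    obtain ⟨c₂, hc₂, hzc₂⟩ := mem_iUnion₂.mp (ht₂ hz.2)
    refine mem_iUnion₂.mpr ⟨WithLp.toLp 2 (c₁, c₂),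
      Finset.mem_image_of_mem _ (Finset.mem_product.mpr ⟨hc₁, hc₂⟩), ?_⟩
    rw [mem_closedBall, two_mul]
    exact (WithLp.prod_dist_le_add _ _).trans (add_le_add hzc₁ hzc₂)
  · calc (((t₁ ×ˢ t₂).image (WithLp.toLp 2)).card : ℕ∞) ≤ (t₁ ×ˢ t₂).card := by
          exact_mod_cast Finset.card_image_le
      _ ≤ (n₁ * n₂ : ℕ) := by
          rw [Finset.card_product]
          exact_mod_cast Nat.mul_le_mul hn₁ hn₂

lemma add_mem_assouadSpectrumExponents_prod {a : ℕ} (hXY : IsDoublingWith (WithLp 2 (X × Y)) a)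
    {θ s₁ s₂ : ℝ} {E : Set X} {F : Set Y} (hs₁ : s₁ ∈ assouadSpectrumExponents θ E)
    (hs₂ : s₂ ∈ assouadSpectrumExponents θ F) :
    s₁ + s₂ ∈ assouadSpectrumExponents θ (WithLp.ofLp ⁻¹' (E ×ˢ F) : Set (WithLp 2 (X × Y))) := by
  obtain ⟨hs₁0, C₁, hC₁, h₁⟩ := hs₁
  obtain ⟨hs₂0, C₂, hC₂, h₂⟩ := hs₂
  refine ⟨add_nonneg hs₁0 hs₂0, C₁ * C₂ * 2 ^ a, by positivity, fun R hR0 hR1 z hz => ?_⟩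
  set r := R ^ (1 / θ)
  have hr : 0 < r := Real.rpow_pos_of_pos hR0 _
  have hball : closedBall z R ∩ WithLp.ofLp ⁻¹' (E ×ˢ F) ⊆
      WithLp.ofLp ⁻¹' ((closedBall z.fst R ∩ E) ×ˢ (closedBall z.snd R ∩ F)) :=
    fun w ⟨hw, hwE, hwF⟩ =>
      ⟨⟨(WithLp.dist_fst_le w z).trans hw, hwE⟩, ⟨(WithLp.dist_snd_le w z).trans hw, hwF⟩⟩
  have hprod := coveringNumber_two_mul_prod_le
    (ENat.le_floor_of_toENNReal_le_ofReal (h₁ R hR0 hR1 z.fst hz.1))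
    (ENat.le_floor_of_toENNReal_le_ofReal (h₂ R hR0 hR1 z.snd hz.2))
  refine ENat.toENNReal_le_ofReal
    ((coveringNumber_mono_set hball).trans (coveringNumber_le_mul_of_le hprod (hXY · r hr))) ?_
  push_cast
  calc (⌊C₁ * (R / r) ^ s₁⌋₊ : ℝ) * ⌊C₂ * (R / r) ^ s₂⌋₊ * 2 ^ a
      ≤ C₁ * (R / r) ^ s₁ * (C₂ * (R / r) ^ s₂) * 2 ^ a := by
        gcongr <;> exact Nat.floor_le (by positivity)
    _ = C₁ * C₂ * 2 ^ a * (R / r) ^ (s₁ + s₂) := by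
        rw [Real.rpow_add (by positivity)]
        ring

lemma assouadSpectrum_prod_le {a b c : ℕ} (hX : IsDoublingWith X a) (hY : IsDoublingWith Y b)
    (hXY : IsDoublingWith (WithLp 2 (X × Y)) c) {θ : ℝ} (hθ : 0 < θ) (hθ1 : θ ≤ 1)
    (E : Set X) (F : Set Y) :
    assouadSpectrum θ (WithLp.ofLp ⁻¹' (E ×ˢ F) : Set (WithLp 2 (X × Y)))
      ≤ assouadSpectrum θ E + assouadSpectrum θ F := by
  refine le_of_forall_pos_le_add fun ε hε => ?_
  have hmem := add_mem_assouadSpectrumExponents_prod hXY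
    (assouadSpectrum_add_mem hθ hθ1 ⟨_, hX.mem_assouadSpectrumExponents hθ hθ1 E⟩ (half_pos hε))
    (assouadSpectrum_add_mem hθ hθ1 ⟨_, hY.mem_assouadSpectrumExponents hθ hθ1 F⟩ (half_pos hε))
  calc _ ≤ assouadSpectrum θ E + ε / 2 + (assouadSpectrum θ F + ε / 2) :=
        assouadSpectrum_le_of_mem hmem
    _ = _ := by ring

end Product

lemma Filter.limsup_le_limsup_add_limsup {α : Type*} {l : Filter α} [l.NeBot] {f g h : α → ℝ}
    (hf₀ : 0 ≤ f) (hg₀ : 0 ≤ g) (hh₀ : 0 ≤ h) (hf : IsBoundedUnder (· ≤ ·) l f)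
    (hg : IsBoundedUnder (· ≤ ·) l g) (hfgh : h ≤ᶠ[l] f + g) :
    limsup h l ≤ limsup f l + limsup g l :=
  (limsup_le_limsup hfgh (isCoboundedUnder_le_of_le l hh₀) (isBoundedUnder_le_add hf hg)).trans
    (limsup_add_le (isBoundedUnder_of_eventually_ge (.of_forall hf₀)) hf
      (isCoboundedUnder_le_of_le l hg₀) hg)

def EuclideanSpace.finAddIsometryEquivProd (m n : ℕ) :
    EuclideanSpace ℝ (Fin (m + n)) ≃ᵢ
      WithLp 2 (EuclideanSpace ℝ (Fin m) × EuclideanSpace ℝ (Fin n)) :=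
  ((LinearIsometryEquiv.piLpCongrLeft 2 ℝ ℝ finSumFinEquiv.symm).trans
    (PiLp.sumPiLpEquivProdLpPiLp 2 fun _ => ℝ)).toIsometryEquiv

/-- Subadditivity of the generalized upper box dimension under Cartesian products,
where `E × F` is realised inside `ℝ^{m+n}` via the first `m` and last `n` coordinates. -/
theorem genUpperBoxDim_prod_le
    (m n : ℕ) (E : Set (EuclideanSpace ℝ (Fin m))) (F : Set (EuclideanSpace ℝ (Fin n))) :
    genUpperBoxDim {z : EuclideanSpace ℝ (Fin (m + n)) |
        ((WithLp.toLp 2 (fun i => z (Fin.castAdd n i)) : EuclideanSpace ℝ (Fin m)) ∈ E) ∧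
        ((WithLp.toLp 2 (fun j => z (Fin.natAdd m j)) : EuclideanSpace ℝ (Fin n)) ∈ F)}
      ≤ genUpperBoxDim E + genUpperBoxDim F := by
  have hP : {z : EuclideanSpace ℝ (Fin (m + n)) |
        ((WithLp.toLp 2 (fun i => z (Fin.castAdd n i)) : EuclideanSpace ℝ (Fin m)) ∈ E) ∧
        ((WithLp.toLp 2 (fun j => z (Fin.natAdd m j)) : EuclideanSpace ℝ (Fin n)) ∈ F)} =
      EuclideanSpace.finAddIsometryEquivProd m n ⁻¹' (WithLp.ofLp ⁻¹' (E ×ˢ F)) := by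
    ext z
    rfl
  have hX := isDoublingWith_finrank (E := EuclideanSpace ℝ (Fin m))
  have hY := isDoublingWith_finrank (E := EuclideanSpace ℝ (Fin n))
  have hXY := isDoublingWith_finrank
    (E := WithLp 2 (EuclideanSpace ℝ (Fin m) × EuclideanSpace ℝ (Fin n)))
  have hθ : ∀ᶠ θ in 𝓝[>] (0 : ℝ), θ ∈ Ioc 0 1 := Ioc_mem_nhdsGT one_pos
  rw [genUpperBoxDim, hP]
  simp_rw [IsometryEquiv.assouadSpectrum_preimage]
  refine limsup_le_limsup_add_limsup (fun θ => assouadSpectrum_nonneg θ E)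
    (fun θ => assouadSpectrum_nonneg θ F) (fun θ => assouadSpectrum_nonneg θ _)
    (isBoundedUnder_of_eventually_le (hθ.mono fun θ hθ => hX.assouadSpectrum_le hθ.1 hθ.2 E))
    (isBoundedUnder_of_eventually_le (hθ.mono fun θ hθ => hY.assouadSpectrum_le hθ.1 hθ.2 F)) ?_
  filter_upwards [hθ] with θ hθ
  exact assouadSpectrum_prod_le hX hY hXY hθ.1 hθ.2 E F

end
end

section
/- For each integer k ≥ 2, let E_k := ⋃_{n≥1} { i·n^{−k/(k−1)} : i = 0, 1, …, n } ⊆ ℝ, and let E := ⋃_{i≥2} (E_i + i), where A + b := { a + b : a ∈ A }. Then E is a countable unbounded subset of ℝ with Hausdorff dimension dim_H E = 0 and generalized upper box dimension \overline{dim}_GB E = 1. -/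
open Filter Metric Set Topology Bornology ENNReal

noncomputable section

variable {X : Type*} [PseudoMetricSpace X]

/-- `E_k = ⋃_{n ≥ 1} {i · n^{-k/(k-1)} : i = 0, …, n}`. -/
def exampleSetEk (k : ℕ) : Set ℝ :=
  ⋃ n ∈ {n : ℕ | 1 ≤ n},
    {x : ℝ | ∃ i : ℕ, i ≤ n ∧ x = (i : ℝ) * (n : ℝ) ^ (-((k : ℝ) / ((k : ℝ) - 1)))}

/-- `E = ⋃_{i ≥ 2} (E_i + i)`, where `A + b = {a + b : a ∈ A}`. -/
def exampleSetE' : Set ℝ :=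
  ⋃ i ∈ {i : ℕ | 2 ≤ i}, (fun a : ℝ => a + (i : ℝ)) '' exampleSetEk i


/-- Upper bound: a subset of `closedBall x R` in `ℝ` can be covered by `⌈R/r⌉+1` balls. -/
lemma coveringNumber_le_aux {x R r : ℝ} (hr : 0 < r) (_hrR : r ≤ R) {A : Set ℝ}
    (hA : A ⊆ closedBall x R) :
    coveringNumber r A ≤ ((⌈R / r⌉₊ + 1 : ℕ) : ℕ∞) := by
  set m := ⌈R / r⌉₊
  set t : Finset ℝ := (Finset.range (m + 1)).image (fun j : ℕ => x - R + r + 2 * r * j) with ht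
  have hcov : A ⊆ ⋃ c ∈ t, closedBall c r := by
    intro y hy
    have hy' := hA hy
    rw [Real.closedBall_eq_Icc] at hy'
    obtain ⟨h1, h2⟩ := hy'
    set d := y - x + R with hd
    have hd0 : 0 ≤ d := by simp [hd]; linarith
    set j := ⌊d / (2 * r)⌋₊ with hj
    have h2r : (0:ℝ) < 2 * r := by linarith
    have hfl : (j : ℝ) ≤ d / (2 * r) := Nat.floor_le (by positivity)
    have hfl2 : d / (2 * r) < j + 1 := Nat.lt_floor_add_one _
    have hjd : (j : ℝ) * (2 * r) ≤ d := by
      rw [← le_div_iff₀ h2r]; exact hfl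
    have hjd2 : d < ((j : ℝ) + 1) * (2 * r) := by
      rw [← div_lt_iff₀ h2r]; exact hfl2
    have hjm : j ≤ m := by
      have hdR : d ≤ 2 * R := by simp [hd]; linarith
      have h1 : (j : ℝ) ≤ R / r := by
        refine hfl.trans ?_
        rw [div_le_div_iff₀ h2r hr]
        nlinarith
      have h2' : (j : ℝ) ≤ (m : ℝ) := h1.trans (Nat.le_ceil _)
      exact_mod_cast h2'
    refine mem_iUnion.2 ⟨x - R + r + 2 * r * j, mem_iUnion.2 ⟨?_, ?_⟩⟩
    · rw [ht]; exact Finset.mem_image_of_mem _ (Finset.mem_range.2 (Nat.lt_succ_of_le hjm))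
    · rw [Real.closedBall_eq_Icc]
      constructor <;> [nlinarith [hjd2]; nlinarith [hjd]]
  refine le_trans (sInf_le ⟨t, hcov, rfl⟩) ?_
  have hc : t.card ≤ m + 1 := by
    rw [ht]; exact (Finset.card_image_le).trans (by simp)
  exact_mod_cast hc

/-- Lower bound: if `A` contains `m+1` points spaced `3r` apart, any cover of `A`
by closed balls of radius `r` uses at least `m+1` balls. -/
lemma le_coveringNumber_aux {r : ℝ} (hr : 0 < r) (a : ℝ) (m : ℕ) {A : Set ℝ}
    (hmem : ∀ j : ℕ, j ≤ m → a + 3 * r * j ∈ A) :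
    ((m + 1 : ℕ) : ℕ∞) ≤ coveringNumber r A := by
  refine le_sInf ?_
  rintro b ⟨t, hcov, rfl⟩
  refine Nat.cast_le.2 ?_
  have hch : ∀ j : ℕ, j ≤ m → ∃ c ∈ t, a + 3 * r * j ∈ closedBall c r := by
    intro j hj
    have := hcov (hmem j hj)
    simpa using this
  choose! f hf1 hf2 using hch
  have hcard : (Finset.range (m + 1)).card ≤ t.card := by
    apply Finset.card_le_card_of_injOn f
    · intro j hj
      exact hf1 j (Nat.lt_succ_iff.mp (Finset.mem_range.1 hj))
    · intro i hi j hj hij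
      simp only [Finset.coe_range, mem_Iio] at hi hj
      have hi' := hf2 i (Nat.lt_succ_iff.mp hi)
      have hj' := hf2 j (Nat.lt_succ_iff.mp hj)
      rw [hij] at hi'
      have hd : dist (a + 3 * r * i) (a + 3 * r * j) ≤ 2 * r := by
        calc dist (a + 3 * r * i) (a + 3 * r * j)
            ≤ dist (a + 3 * r * i) (f j) + dist (f j) (a + 3 * r * j) := dist_triangle _ _ _
        _ ≤ r + r := add_le_add (mem_closedBall.1 hi') (by rw [dist_comm]; exact mem_closedBall.1 hj')
        _ = 2 * r := by ring
      by_contra hne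
      have h1 : (1 : ℤ) ≤ |(i : ℤ) - j| := Int.one_le_abs (by omega)
      have h1' : (1 : ℝ) ≤ |(i : ℝ) - j| := by exact_mod_cast h1
      rw [Real.dist_eq, abs_le] at hd
      rcases abs_cases ((i : ℝ) - j) with ⟨he, _⟩ | ⟨he, _⟩ <;> rw [he] at h1' <;> nlinarith
  simpa using hcard

lemma mem_exampleSetEk {k n i : ℕ} (hn : 1 ≤ n) (hi : i ≤ n) :
    (i : ℝ) * (n : ℝ) ^ (-((k : ℝ) / ((k : ℝ) - 1))) ∈ exampleSetEk k := by
  refine mem_iUnion.2 ⟨n, mem_iUnion.2 ⟨hn, ⟨i, hi, rfl⟩⟩⟩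

lemma mem_exampleSetE' {i : ℕ} (hi : 2 ≤ i) {x : ℝ} (hx : x ∈ exampleSetEk i) :
    x + (i : ℝ) ∈ exampleSetE' := by
  refine mem_iUnion.2 ⟨i, mem_iUnion.2 ⟨hi, ⟨x, hx, rfl⟩⟩⟩

lemma natCast_mem_exampleSetE' {i : ℕ} (hi : 2 ≤ i) : (i : ℝ) ∈ exampleSetE' := by
  have h0 : (0 : ℝ) ∈ exampleSetEk i := by
    have := mem_exampleSetEk (k := i) (n := 1) (i := 0) le_rfl (Nat.zero_le _)
    simpa using this
  simpa using mem_exampleSetE' hi h0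

lemma one_mem_assouadSpectrumSet {θ : ℝ} (hθ0 : 0 < θ) (hθ1 : θ < 1) (F : Set ℝ) :
    (1 : ℝ) ∈ {s : ℝ | 0 ≤ s ∧ ∃ C > (0 : ℝ), ∀ R : ℝ, 0 < R → R < 1 → ∀ x ∈ F,
      (coveringNumber (R ^ (1 / θ)) (closedBall x R ∩ F) : ℝ≥0∞)
        ≤ ENNReal.ofReal (C * (R / R ^ (1 / θ)) ^ (1:ℝ))} := by
  refine ⟨zero_le_one, 3, by norm_num, ?_⟩
  intro R hR0 hR1 x hx
  set r := R ^ (1 / θ) with hrdef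
  have hr0 : 0 < r := Real.rpow_pos_of_pos hR0 _
  have hrR : r ≤ R := by
    have h1 : (1:ℝ) ≤ 1 / θ := by
      rw [le_div_iff₀ hθ0]; linarith
    have := Real.rpow_le_rpow_of_exponent_ge hR0 hR1.le h1
    rw [Real.rpow_one] at this
    exact this
  have hcov := coveringNumber_le_aux (x := x) hr0 hrR (inter_subset_left (t := F))
  set m := ⌈R / r⌉₊ with hm
  have h1le : (1 : ℝ) ≤ R / r := (one_le_div hr0).2 hrR
  have hmb : ((m : ℝ) + 1) ≤ 3 * (R / r) := by
    have := Nat.ceil_lt_add_one (a := R / r) (by positivity)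
    rw [← hm] at this
    linarith
  calc (coveringNumber r (closedBall x R ∩ F) : ℝ≥0∞)
      ≤ (((m + 1 : ℕ) : ℕ∞) : ℝ≥0∞) := by exact_mod_cast ENat.toENNReal_le.2 hcov
  _ = ENNReal.ofReal ((m : ℝ) + 1) := by
      rw [ENat.toENNReal_coe]
      push_cast
      rw [ENNReal.ofReal_add (by positivity) (by norm_num), ENNReal.ofReal_natCast,
        ENNReal.ofReal_one]
  _ ≤ ENNReal.ofReal (3 * (R / r) ^ (1:ℝ)) := by
      rw [Real.rpow_one]
      exact ENNReal.ofReal_le_ofReal hmb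

lemma assouadSpectrum_le_one {θ : ℝ} (hθ0 : 0 < θ) (hθ1 : θ < 1) (F : Set ℝ) :
    assouadSpectrum θ F ≤ 1 := by
  refine csInf_le ⟨0, fun s hs => hs.1⟩ ?_
  exact one_mem_assouadSpectrumSet hθ0 hθ1 F

lemma one_le_assouadSpectrum_E {k : ℕ} (hk : 2 ≤ k) :
    1 ≤ assouadSpectrum (1 / (k : ℝ)) exampleSetE' := by
  have hk1 : (1 : ℝ) < (k : ℝ) := by exact_mod_cast Nat.lt_of_lt_of_le one_lt_two hk
  have hθ0 : 0 < 1 / (k : ℝ) := by positivity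
  have hθ1 : 1 / (k : ℝ) < 1 := by rw [div_lt_one (by linarith)]; exact hk1
  refine le_csInf ⟨1, one_mem_assouadSpectrumSet hθ0 hθ1 _⟩ ?_
  rintro s ⟨hs0, C, hC, h⟩
  by_contra hs1
  push_neg at hs1
  have hs1' : 0 < 1 - s := by linarith
  have h3C : (0 : ℝ) < 3 * C := by linarith
  obtain ⟨n, hn⟩ := exists_nat_gt (max 1 ((3 * C) ^ (1 / (1 - s))))
  have hn1 : (1 : ℝ) < (n : ℝ) := lt_of_le_of_lt (le_max_left _ _) hn
  have hn0 : (0 : ℝ) < (n : ℝ) := by linarith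
  have hnn : 1 ≤ n := by exact_mod_cast hn1.le
  have hkey : 3 * C < (n : ℝ) ^ (1 - s) := by
    have hlt := Real.rpow_lt_rpow (Real.rpow_pos_of_pos h3C _).le
      (lt_of_le_of_lt (le_max_right _ _) hn) hs1'
    rwa [← Real.rpow_mul h3C.le, one_div_mul_cancel (by linarith), Real.rpow_one] at hlt
  have hk1' : (0 : ℝ) < (k : ℝ) - 1 := by linarith
  set R := (n : ℝ) ^ (-(1 / ((k : ℝ) - 1))) with hRdef
  set r := (n : ℝ) ^ (-((k : ℝ) / ((k : ℝ) - 1))) with hrdef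
  have hR0 : 0 < R := Real.rpow_pos_of_pos hn0 _
  have hr0 : 0 < r := Real.rpow_pos_of_pos hn0 _
  have hR1 : R < 1 := Real.rpow_lt_one_of_one_lt_of_neg hn1 (neg_lt_zero.2 (by positivity))
  have hRθ : R ^ (1 / (1 / (k : ℝ))) = r := by
    rw [one_div_one_div, hRdef, ← Real.rpow_mul hn0.le, hrdef]
    congr 1
    field_simp
  have hRr : R / r = (n : ℝ) := by
    rw [hRdef, hrdef, ← Real.rpow_sub hn0]
    rw [show -(1 / ((k : ℝ) - 1)) - -((k : ℝ) / ((k : ℝ) - 1)) = 1 by field_simp; ring,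
      Real.rpow_one]
  have hnrR : (n : ℝ) * r = R := by
    rw [hrdef, hRdef]
    nth_rewrite 1 [show (n : ℝ) = (n : ℝ) ^ (1 : ℝ) from (Real.rpow_one _).symm]
    rw [← Real.rpow_add hn0]
    congr 1
    field_simp
    ring
  have hkE : ((k : ℕ) : ℝ) ∈ exampleSetE' := natCast_mem_exampleSetE' hk
  have hbound := h R hR0 hR1 ((k : ℕ) : ℝ) hkE
  rw [hRθ, hRr] at hbound
  set m := n / 3 with hm
  have hpts : ∀ j : ℕ, j ≤ m → ((k : ℕ) : ℝ) + 3 * r * j ∈ closedBall ((k : ℕ) : ℝ) R ∩ exampleSetE' := by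
    intro j hj
    have h3j : 3 * j ≤ n := by omega
    have h3j' : (3 * (j : ℝ)) ≤ (n : ℝ) := by exact_mod_cast h3j
    constructor
    · rw [mem_closedBall, Real.dist_eq]
      have habs : |((k : ℕ) : ℝ) + 3 * r * j - ((k : ℕ) : ℝ)| = 3 * r * j := by
        rw [show ((k : ℕ) : ℝ) + 3 * r * j - ((k : ℕ) : ℝ) = 3 * r * j by ring,
          abs_of_nonneg (by positivity)]
      rw [habs, ← hnrR]
      nlinarith [hr0]
    · have hmem := mem_exampleSetE' hk (mem_exampleSetEk (k := k) hnn h3j)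
      rw [← hrdef] at hmem
      convert hmem using 1
      push_cast
      ring
  have hlow := le_coveringNumber_aux hr0 ((k : ℕ) : ℝ) m hpts
  have hlow' : (((m + 1 : ℕ) : ℕ∞) : ℝ≥0∞) ≤ ENNReal.ofReal (C * (n : ℝ) ^ s) :=
    le_trans (ENat.toENNReal_le.2 hlow) hbound
  have hreal : ((m : ℝ) + 1) ≤ C * (n : ℝ) ^ s := by
    rw [ENat.toENNReal_coe, ← ENNReal.ofReal_natCast,
      ENNReal.ofReal_le_ofReal_iff (by positivity)] at hlow'
    push_cast at hlow'
    linarith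
  have h3m : (n : ℝ) < 3 * ((m : ℝ) + 1) := by
    have : n < 3 * (m + 1) := by omega
    exact_mod_cast this
  have hns : (0 : ℝ) < (n : ℝ) ^ s := Real.rpow_pos_of_pos hn0 _
  have hfin : 3 * C * (n : ℝ) ^ s < (n : ℝ) := by
    have := mul_lt_mul_of_pos_right hkey hns
    rwa [← Real.rpow_add hn0, sub_add_cancel, Real.rpow_one] at this
  linarith


lemma exampleSetEk_countable (k : ℕ) : (exampleSetEk k).Countable := by
  refine Set.Countable.biUnion (Set.to_countable _) fun n _ => ?_
  refine (Set.countable_range (fun i : ℕ => (i : ℝ) * (n : ℝ) ^ (-((k : ℝ) / ((k : ℝ) - 1))))).mono ?_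
  rintro x ⟨i, -, hx⟩
  exact ⟨i, hx.symm⟩

lemma exampleSetE'_countable : exampleSetE'.Countable :=
  Set.Countable.biUnion (Set.to_countable _) fun i _ => (exampleSetEk_countable i).image _

lemma exampleSetE'_not_bounded : ¬ IsBounded exampleSetE' := by
  intro hb
  obtain ⟨M, hM⟩ := (isBounded_iff_subset_closedBall 0).1 hb
  obtain ⟨j, hj⟩ := exists_nat_gt (max M 1)
  have hj2 : 2 ≤ j := by
    have : (1:ℝ) < j := lt_of_le_of_lt (le_max_right _ _) hj
    exact_mod_cast Nat.one_lt_cast.mp this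
  have := hM (natCast_mem_exampleSetE' hj2)
  rw [mem_closedBall, Real.dist_eq, sub_zero, abs_of_nonneg (by positivity)] at this
  have : M < (j:ℝ) := lt_of_le_of_lt (le_max_left _ _) hj
  linarith [hM (natCast_mem_exampleSetE' hj2), this]

/-- `E = ⋃_{i ≥ 2}(E_i + i)` is a countable unbounded set with `dim_H E = 0` and
`\overline{dim}_{GB} E = 1`. -/
theorem exampleSetE'_countable_unbounded_dimH_zero_genUpperBoxDim_one :
    exampleSetE'.Countable ∧ ¬ IsBounded exampleSetE' ∧
      dimH exampleSetE' = 0 ∧ genUpperBoxDim exampleSetE' = 1 := by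
  refine ⟨exampleSetE'_countable, exampleSetE'_not_bounded,
    exampleSetE'_countable.dimH_zero, ?_⟩
  rw [genUpperBoxDim, Filter.limsup_eq]
  have hlb : ∀ a ∈ {a : ℝ | ∀ᶠ θ in 𝓝[>] (0:ℝ), assouadSpectrum θ exampleSetE' ≤ a}, 1 ≤ a := by
    intro a ha
    have htend : Tendsto (fun k : ℕ => 1 / (k : ℝ)) atTop (𝓝[>] (0:ℝ)) := by
      apply tendsto_nhdsWithin_of_tendsto_nhds_of_eventually_within _
        tendsto_one_div_atTop_nhds_zero_nat
      filter_upwards [eventually_ge_atTop 1] with k hk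
      exact mem_Ioi.2 (by positivity)
    have hev : ∀ᶠ k : ℕ in atTop, assouadSpectrum (1/(k:ℝ)) exampleSetE' ≤ a := htend.eventually ha
    obtain ⟨k, hk2, hka⟩ := ((eventually_ge_atTop 2).and hev).exists
    exact le_trans (one_le_assouadSpectrum_E hk2) hka
  refine le_antisymm (csInf_le ⟨1, hlb⟩ ?_) (le_csInf ⟨1, ?_⟩ hlb)
  all_goals
    filter_upwards [Ioo_mem_nhdsGT_of_mem (show (0:ℝ) ∈ Ico (0:ℝ) 1 by simp)] with θ hθ
    exact assouadSpectrum_le_one hθ.1 hθ.2 _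

end
end
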